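/- arXiv:2102.06688 — 2 statements merged into one kernel-verified Lean document; each statement's English description precedes it below -/
import Mathlib

section
/- Let X be a set of pairwise non-opposite chambers of PG(3,q) and let l be a line. Then at most (q+1)q^2 chambers (Q,h,τ) of X satisfy Q ∉ l and l ⊆ τ. -/
open Module

variable (F : Type*) [Field F] [Fintype F]

/-- Subspaces of the ambient 4-dimensional vector space over `F`; the rank 1, 2, 3
subspaces are the points, lines and planes of `PG(3, q)` where `q = |F|`. -/
abbrev SubPG := Submodule F (Fin 4 → F)

variable {F}

/-- `W` is a point of `PG(3, q)`. -/
def IsPt (W : SubPG F) : Prop := finrank F W = 1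

/-- `W` is a line of `PG(3, q)`. -/
def IsLn (W : SubPG F) : Prop := finrank F W = 2

/-- `W` is a plane of `PG(3, q)`. -/
def IsPl (W : SubPG F) : Prop := finrank F W = 3

/-- A chamber of `PG(3, q)`: a pairwise incident point-line-plane triple. -/
def IsChamber (c : SubPG F × SubPG F × SubPG F) : Prop :=
  IsPt c.1 ∧ IsLn c.2.1 ∧ IsPl c.2.2 ∧ c.1 ≤ c.2.1 ∧ c.2.1 ≤ c.2.2

/-- Two chambers are opposite if the point of each does not lie in the plane of the
other and their lines are skew. -/
def Opp (c c' : SubPG F × SubPG F × SubPG F) : Prop :=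
  ¬ c.1 ≤ c'.2.2 ∧ c.2.1 ⊓ c'.2.1 = ⊥ ∧ ¬ c'.1 ≤ c.2.2

/-- A point or plane `x` is incident with a line `l` when `x ⊆ l` or `l ⊆ x`. -/
def LineIncid (x l : SubPG F) : Prop := x ≤ l ∨ l ≤ x

/-- `F(x)`: the set of all chambers whose line is incident with `x`. -/
def FF (x : SubPG F) : Set (SubPG F × SubPG F × SubPG F) :=
  {c | IsChamber c ∧ LineIncid x c.2.1}

/-- A set of pairwise non-opposite chambers. -/
def NonOppSet (X : Set (SubPG F × SubPG F × SubPG F)) : Prop :=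
  (∀ c ∈ X, IsChamber c) ∧ ∀ c ∈ X, ∀ c' ∈ X, ¬ Opp c c'

/-- A maximal set of pairwise non-opposite chambers. -/
def MaxNonOppSet (X : Set (SubPG F × SubPG F × SubPG F)) : Prop :=
  NonOppSet X ∧ ∀ c : SubPG F × SubPG F × SubPG F, IsChamber c → c ∉ X → ∃ c' ∈ X, Opp c c'

/-! Every chamber `(Q, h, τ)` with `Q ∉ l` and `l ⊆ τ` is determined by its point `Q` and the
point `h ∩ l`, since `h = Q ∨ (h ∩ l)` and `τ = l ∨ Q`. If all these chambers share one plane,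
this gives at most `q² · (q + 1)` of them. Otherwise, two such chambers in different planes
through `l` can only fail to be opposite when their lines meet, necessarily on `l`; comparing each
chamber with one in another plane, all of them have the same point `h ∩ l`, so they are determined
by `Q` alone, a point off `l`, of which there are `q³ + q²`. -/

section PointCount

variable {K V : Type*} [Field K] [Finite K] [AddCommGroup V] [Module K V]

theorem ncard_finrank_eq_one_le (W : Submodule K V) :
    {H : Submodule K V | finrank K H = 1 ∧ H ≤ W}.ncard
      = ∑ i ∈ Finset.range (finrank K W), Nat.card K ^ i := by
  have hmap : ∀ {H : Submodule K V}, H ≤ W → (H.comap W.subtype).map W.subtype = H :=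
    fun hHW => by rw [Submodule.map_comap_subtype, inf_eq_right.mpr hHW]
  have himage : {H : Submodule K V | finrank K H = 1 ∧ H ≤ W}
      = Submodule.map W.subtype '' {H : Submodule K W | finrank K H = 1} := by
    ext H
    refine ⟨fun ⟨hH, hHW⟩ => ⟨H.comap W.subtype, ?_, hmap hHW⟩, ?_⟩
    · show finrank K _ = 1
      rwa [← Submodule.finrank_map_subtype_eq, hmap hHW]
    · rintro ⟨H, hH, rfl⟩
      exact ⟨by rwa [Submodule.finrank_map_subtype_eq], Submodule.map_subtype_le W H⟩
  rw [himage, Set.ncard_image_of_injective _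
      (Submodule.map_injective_of_injective W.injective_subtype),
    ← Projectivization.card_of_finrank K W rfl, ← Nat.card_coe_set_eq]
  exact Nat.card_congr (Projectivization.equivSubmodule K W).symm

theorem ncard_finrank_eq_one_le_not_le [FiniteDimensional K V] {U W : Submodule K V}
    (hUW : U ≤ W) :
    {H : Submodule K V | finrank K H = 1 ∧ H ≤ W ∧ ¬ H ≤ U}.ncard
      = ∑ i ∈ Finset.Ico (finrank K U) (finrank K W), Nat.card K ^ i := by
  have : Finite V := Module.finite_of_finite K
  have hdiff : {H : Submodule K V | finrank K H = 1 ∧ H ≤ W ∧ ¬ H ≤ U}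
      = {H : Submodule K V | finrank K H = 1 ∧ H ≤ W}
        \ {H : Submodule K V | finrank K H = 1 ∧ H ≤ U} := by
    ext H
    simp only [Set.mem_ofPred_eq, Set.mem_sdiff]
    tauto
  have hsub : {H : Submodule K V | finrank K H = 1 ∧ H ≤ U}
      ⊆ {H : Submodule K V | finrank K H = 1 ∧ H ≤ W} := fun _ h => ⟨h.1, h.2.trans hUW⟩
  rw [hdiff, Set.ncard_sdiff hsub, ncard_finrank_eq_one_le, ncard_finrank_eq_one_le,
    ← Finset.sum_range_add_sum_Ico _ (Submodule.finrank_mono hUW), Nat.add_sub_cancel_left]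

end PointCount

section Incidence

variable {K : Type*} [Field K]

theorem ncard_pts_le_of_isLn [Fintype K] {l : SubPG K} (hl : IsLn l) :
    {P : SubPG K | IsPt P ∧ P ≤ l}.ncard = Fintype.card K + 1 := by
  refine (ncard_finrank_eq_one_le l).trans ?_
  simp [show finrank K l = 2 from hl, Finset.sum_range_succ, Nat.card_eq_fintype_card, add_comm]

theorem ncard_pts_le_not_le_of_isPl [Fintype K] {l τ : SubPG K} (hl : IsLn l) (hτ : IsPl τ)
    (hlτ : l ≤ τ) : {Q : SubPG K | IsPt Q ∧ Q ≤ τ ∧ ¬ Q ≤ l}.ncard = Fintype.card K ^ 2 := by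
  refine (ncard_finrank_eq_one_le_not_le hlτ).trans ?_
  simp [show finrank K l = 2 from hl, show finrank K τ = 3 from hτ, Nat.card_eq_fintype_card]

theorem ncard_pts_not_le_of_isLn [Fintype K] {l : SubPG K} (hl : IsLn l) :
    {Q : SubPG K | IsPt Q ∧ ¬ Q ≤ l}.ncard = Fintype.card K ^ 2 + Fintype.card K ^ 3 := by
  have h := ncard_finrank_eq_one_le_not_le (le_top : l ≤ ⊤)
  simp only [le_top, true_and, finrank_top, Module.finrank_fin_fun] at h
  refine h.trans ?_
  simp [show finrank K l = 2 from hl, Finset.sum_Ico_succ_top, Nat.card_eq_fintype_card]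

theorem IsPt.eq_of_le_of_ne_bot {P A : SubPG K} (hP : IsPt P) (hAP : A ≤ P) (hA : A ≠ ⊥) :
    A = P :=
  Submodule.eq_of_le_of_finrank_le hAP (hP.trans_le (Submodule.one_le_finrank_iff.mpr hA))

theorem IsPt.inf_eq_bot_of_not_le {Q W : SubPG K} (hQ : IsPt Q) (hQW : ¬ Q ≤ W) : Q ⊓ W = ⊥ := by
  by_contra h
  exact hQW (hQ.eq_of_le_of_ne_bot inf_le_left h ▸ inf_le_right)

theorem IsPt.finrank_sup_of_not_le {Q W : SubPG K} (hQ : IsPt Q) (hQW : ¬ Q ≤ W) :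
    finrank K ↥(W ⊔ Q) = finrank K W + 1 := by
  have h := Submodule.finrank_sup_add_finrank_inf_eq W Q
  rw [inf_comm, hQ.inf_eq_bot_of_not_le hQW, finrank_bot, hQ] at h
  omega

theorem IsPl.eq_of_le {τ τ' : SubPG K} (hτ : IsPl τ) (hτ' : IsPl τ') (h : τ ≤ τ') : τ = τ' :=
  Submodule.eq_of_le_of_finrank_le h (hτ'.trans_le hτ.ge)

theorem IsPl.inf_eq_of_ne {τ τ' l : SubPG K} (hτ : IsPl τ) (hτ' : IsPl τ') (hl : IsLn l)
    (hlτ : l ≤ τ) (hlτ' : l ≤ τ') (hne : τ ≠ τ') : τ ⊓ τ' = l := by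
  have hlt : τ ⊓ τ' < τ := inf_le_left.lt_of_ne fun h => hne (hτ.eq_of_le hτ' (h ▸ inf_le_right))
  have h := Submodule.finrank_lt_finrank_of_lt hlt
  rw [hτ] at h
  exact (Submodule.eq_of_le_of_finrank_le (le_inf hlτ hlτ') (by rw [hl]; omega)).symm

theorem IsChamber.pt_le_plane {c : SubPG K × SubPG K × SubPG K} (hc : IsChamber c) :
    c.1 ≤ c.2.2 :=
  hc.2.2.2.1.trans hc.2.2.2.2

end Incidence

structure IsChamberOffLine {K : Type*} [Field K] (l : SubPG K)
    (c : SubPG K × SubPG K × SubPG K) : Prop where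
  isChamber : IsChamber c
  not_le : ¬ c.1 ≤ l
  le_plane : l ≤ c.2.2

namespace IsChamberOffLine

variable {K : Type*} [Field K] {l : SubPG K} {c c' : SubPG K × SubPG K × SubPG K}

theorem plane_eq (hc : IsChamberOffLine l c) (hl : IsLn l) : c.2.2 = l ⊔ c.1 := by
  refine (Submodule.eq_of_le_of_finrank_le (sup_le hc.le_plane hc.isChamber.pt_le_plane) ?_).symm
  rw [hc.isChamber.1.finrank_sup_of_not_le hc.not_le, hl, hc.isChamber.2.2.1]

theorem isPt_line_inf (hc : IsChamberOffLine l c) (hl : IsLn l) : IsPt (c.2.1 ⊓ l) := by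
  obtain ⟨-, hh, hτ, hQh, hhτ⟩ := hc.isChamber
  have hsup := Submodule.finrank_mono (sup_le hhτ hc.le_plane)
  have hlt : c.2.1 ⊓ l < c.2.1 :=
    inf_le_left.lt_of_ne fun h => hc.not_le (hQh.trans (h ▸ inf_le_right))
  have hinf := Submodule.finrank_lt_finrank_of_lt hlt
  have hsum := Submodule.finrank_sup_add_finrank_inf_eq c.2.1 l
  rw [hh, hl] at hsum
  rw [hh] at hinf
  rw [hτ] at hsup
  show finrank K _ = 1
  omega

theorem line_eq (hc : IsChamberOffLine l c) (hl : IsLn l) : c.2.1 = c.2.1 ⊓ l ⊔ c.1 := by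
  have hQ : ¬ c.1 ≤ c.2.1 ⊓ l := fun h => hc.not_le (h.trans inf_le_right)
  refine (Submodule.eq_of_le_of_finrank_le (sup_le inf_le_left hc.isChamber.2.2.2.1) ?_).symm
  rw [hc.isChamber.1.finrank_sup_of_not_le hQ, hc.isPt_line_inf hl, hc.isChamber.2.1]

theorem eq_of_fst_eq_of_line_inf_eq (hc : IsChamberOffLine l c) (hc' : IsChamberOffLine l c')
    (hl : IsLn l) (hQ : c.1 = c'.1) (hP : c.2.1 ⊓ l = c'.2.1 ⊓ l) : c = c' := by
  have hh : c.2.1 = c'.2.1 := by rw [hc.line_eq hl, hc'.line_eq hl, hQ, hP]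
  have hτ : c.2.2 = c'.2.2 := by rw [hc.plane_eq hl, hc'.plane_eq hl, hQ]
  exact Prod.ext hQ (Prod.ext hh hτ)

theorem line_inf_eq_of_plane_ne (hc : IsChamberOffLine l c) (hc' : IsChamberOffLine l c')
    (hl : IsLn l) (hopp : ¬ Opp c c') (hne : c.2.2 ≠ c'.2.2) : c.2.1 ⊓ l = c'.2.1 ⊓ l := by
  have hτ := hc.isChamber.2.2.1
  have hτ' := hc'.isChamber.2.2.1
  have hQτ' : ¬ c.1 ≤ c'.2.2 := fun h =>
    hne (hτ.eq_of_le hτ' (hc.plane_eq hl ▸ sup_le hc'.le_plane h))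
  have hQ'τ : ¬ c'.1 ≤ c.2.2 := fun h =>
    hne (hτ'.eq_of_le hτ (hc'.plane_eq hl ▸ sup_le hc.le_plane h)).symm
  have hmeet : c.2.1 ⊓ c'.2.1 ≠ ⊥ := fun h => hopp ⟨hQτ', h, hQ'τ⟩
  have hle : c.2.1 ⊓ c'.2.1 ≤ l := by
    rw [← hτ.inf_eq_of_ne hτ' hl hc.le_plane hc'.le_plane hne]
    exact inf_le_inf hc.isChamber.2.2.2.2 hc'.isChamber.2.2.2.2
  rw [← (hc.isPt_line_inf hl).eq_of_le_of_ne_bot (le_inf inf_le_left hle) hmeet,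
    ← (hc'.isPt_line_inf hl).eq_of_le_of_ne_bot (le_inf inf_le_right hle) hmeet]

end IsChamberOffLine

section ChamberCount

variable {K : Type*} [Field K] {l : SubPG K} {S : Set (SubPG K × SubPG K × SubPG K)}

theorem line_inf_eq_of_mem_of_plane_ne (hl : IsLn l) (hS : ∀ c ∈ S, IsChamberOffLine l c)
    (hopp : ∀ c ∈ S, ∀ c' ∈ S, ¬ Opp c c') {c₁ c₂ : SubPG K × SubPG K × SubPG K}
    (hc₁ : c₁ ∈ S) (hc₂ : c₂ ∈ S) (hne : c₁.2.2 ≠ c₂.2.2) :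
    ∀ c ∈ S, ∀ c' ∈ S, c.2.1 ⊓ l = c'.2.1 ⊓ l := by
  have hmeet : ∀ {c c'}, c ∈ S → c' ∈ S → c.2.2 ≠ c'.2.2 → c.2.1 ⊓ l = c'.2.1 ⊓ l :=
    fun hc hc' => (hS _ hc).line_inf_eq_of_plane_ne (hS _ hc') hl (hopp _ hc _ hc')
  have hmeet₁ : ∀ c ∈ S, c.2.1 ⊓ l = c₁.2.1 ⊓ l := by
    intro c hc
    by_cases h : c.2.2 = c₁.2.2
    · rw [hmeet hc hc₂ (h ▸ hne), hmeet hc₁ hc₂ hne]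
    · exact hmeet hc hc₁ h
  exact fun c hc c' hc' => (hmeet₁ c hc).trans (hmeet₁ c' hc').symm

variable [Fintype K]

theorem ncard_le_of_plane_eq (hl : IsLn l) (hS : ∀ c ∈ S, IsChamberOffLine l c)
    (hplane : ∀ c ∈ S, ∀ c' ∈ S, c.2.2 = c'.2.2) :
    S.ncard ≤ (Fintype.card K + 1) * Fintype.card K ^ 2 := by
  obtain rfl | ⟨c₀, hc₀⟩ := S.eq_empty_or_nonempty
  · simp
  have hmaps : ∀ c ∈ S, (c.2.1 ⊓ l, c.1)
      ∈ {P : SubPG K | IsPt P ∧ P ≤ l} ×ˢ {Q : SubPG K | IsPt Q ∧ Q ≤ c₀.2.2 ∧ ¬ Q ≤ l} :=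
    fun c hc => ⟨⟨(hS c hc).isPt_line_inf hl, inf_le_right⟩, (hS c hc).isChamber.1,
      hplane c hc c₀ hc₀ ▸ (hS c hc).isChamber.pt_le_plane, (hS c hc).not_le⟩
  have hinj : Set.InjOn (fun c => (c.2.1 ⊓ l, c.1)) S := fun c hc c' hc' h =>
    (hS c hc).eq_of_fst_eq_of_line_inf_eq (hS c' hc') hl (congrArg Prod.snd h)
      (congrArg Prod.fst h)
  calc S.ncard ≤ _ := Set.ncard_le_ncard_of_injOn _ hmaps hinj (Set.toFinite _)
    _ = _ := by
      rw [Set.ncard_prod, ncard_pts_le_of_isLn hl, ncard_pts_le_not_le_of_isPl hl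
        (hS c₀ hc₀).isChamber.2.2.1 (hS c₀ hc₀).le_plane]

theorem ncard_le_of_line_inf_eq (hl : IsLn l) (hS : ∀ c ∈ S, IsChamberOffLine l c)
    (hmeet : ∀ c ∈ S, ∀ c' ∈ S, c.2.1 ⊓ l = c'.2.1 ⊓ l) :
    S.ncard ≤ (Fintype.card K + 1) * Fintype.card K ^ 2 := by
  have hinj : Set.InjOn Prod.fst S := fun c hc c' hc' h =>
    (hS c hc).eq_of_fst_eq_of_line_inf_eq (hS c' hc') hl h (hmeet c hc c' hc')
  calc S.ncard ≤ {Q : SubPG K | IsPt Q ∧ ¬ Q ≤ l}.ncard :=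
        Set.ncard_le_ncard_of_injOn _ (fun c hc => ⟨(hS c hc).isChamber.1, (hS c hc).not_le⟩)
          hinj (Set.toFinite _)
    _ = Fintype.card K ^ 2 + Fintype.card K ^ 3 := ncard_pts_not_le_of_isLn hl
    _ = (Fintype.card K + 1) * Fintype.card K ^ 2 := by ring

end ChamberCount

theorem card_chambers_plane_through_line (q : ℕ) (hq : Fintype.card F = q)
    (X : Set (SubPG F × SubPG F × SubPG F)) (hX : NonOppSet X)
    (l : SubPG F) (hl : IsLn l) :
    {c ∈ X | ¬ c.1 ≤ l ∧ l ≤ c.2.2}.ncard ≤ (q + 1) * q ^ 2 := by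
  subst hq
  set S := {c ∈ X | ¬ c.1 ≤ l ∧ l ≤ c.2.2}
  have hS : ∀ c ∈ S, IsChamberOffLine l c := fun c hc => ⟨hX.1 c hc.1, hc.2.1, hc.2.2⟩
  by_cases hplane : ∀ c ∈ S, ∀ c' ∈ S, c.2.2 = c'.2.2
  · exact ncard_le_of_plane_eq hl hS hplane
  · push Not at hplane
    obtain ⟨c₁, hc₁, c₂, hc₂, hne⟩ := hplane
    have hopp : ∀ c ∈ S, ∀ c' ∈ S, ¬ Opp c c' := fun c hc c' hc' => hX.2 c hc.1 c' hc'.1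
    exact ncard_le_of_line_inf_eq hl hS (line_inf_eq_of_mem_of_plane_ne hl hS hopp hc₁ hc₂ hne)
end

section
/- In PG(3,q), let l be a line, π a plane containing l, and let C be the set consisting of the q^2 points of π not on l together with the q planes through l other than π. Then |C| = q^2 + q and every line of PG(3,q) is incident with at least one element of C. Consequently, the graph on the chambers of PG(3,q) with adjacency given by oppositeness has chromatic number at most q^2+q. -/
open Module

variable (F : Type*) [Field F] [Fintype F]

variable {F}

set_option linter.unusedSectionVars false

/-- The graph whose vertices are the chambers of `PG(3, q)`, two chambers being
adjacent when they are opposite. -/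
def chamberGraph (F : Type*) [Field F] [Fintype F] :
    SimpleGraph {c : SubPG F × SubPG F × SubPG F // IsChamber c} where
  Adj c c' := Opp c.1 c'.1
  symm := by
    refine ⟨?_⟩
    rintro c c' ⟨h1, h2, h3⟩
    exact ⟨h3, by rw [inf_comm]; exact h2, h1⟩
  loopless := by
    refine ⟨?_⟩
    rintro ⟨c, h⟩ ⟨h1, _, _⟩
    exact h1 (h.2.2.2.1.trans h.2.2.2.2)

lemma finrank_amb : finrank F (Fin 4 → F) = 4 := by
  simp [Module.finrank_fin_fun]

instance : Finite (SubPG F) :=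
  Finite.of_injective (fun W : SubPG F => (W : Set (Fin 4 → F))) SetLike.coe_injective

lemma pt_ne_bot {P : SubPG F} (h : IsPt P) : P ≠ ⊥ := by
  intro hb
  rw [hb] at h
  simp [IsPt, finrank_bot] at h

lemma pt_gen {P : SubPG F} (h : IsPt P) : ∃ w, w ≠ 0 ∧ P = Submodule.span F {w} := by
  obtain ⟨w, hwP, hw0⟩ := Submodule.exists_mem_ne_zero_of_ne_bot (pt_ne_bot h)
  refine ⟨w, hw0, ?_⟩
  refine (Submodule.eq_of_le_of_finrank_le
    ((Submodule.span_singleton_le_iff_mem _ _).2 hwP) ?_).symm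
  rw [finrank_span_singleton hw0]
  exact h.le

lemma finrank_sup_span_singleton {p : SubPG F} {v : Fin 4 → F} (hv : v ∉ p) :
    finrank F ↥(p ⊔ Submodule.span F {v}) = finrank F ↥p + 1 := by
  have hv0 : v ≠ 0 := fun h => hv (h ▸ p.zero_mem)
  have hd : p ⊓ Submodule.span F {v} = ⊥ :=
    ((Submodule.disjoint_span_singleton' hv0).2 hv).eq_bot
  have := Submodule.finrank_sup_add_finrank_inf_eq p (Submodule.span F {v})
  rw [hd, finrank_bot, finrank_span_singleton hv0] at this
  omega

lemma line_inf_ne_bot {x m m' : SubPG F} (hx : IsPt x ∨ IsPl x)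
    (hm : IsLn m) (hm' : IsLn m') (h1 : LineIncid x m) (h2 : LineIncid x m') :
    m ⊓ m' ≠ ⊥ := by
  rcases hx with hx | hx
  · have hxm : x ≤ m := by
      rcases h1 with h | h
      · exact h
      · have := Submodule.finrank_mono h
        rw [hm, hx] at this; omega
    have hxm' : x ≤ m' := by
      rcases h2 with h | h
      · exact h
      · have := Submodule.finrank_mono h
        rw [hm', hx] at this; omega
    intro hbot
    exact pt_ne_bot hx (le_bot_iff.1 (hbot ▸ le_inf hxm hxm'))
  · have hmx : m ≤ x := by
      rcases h1 with h | h
      · have := Submodule.finrank_mono h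
        rw [hm, hx] at this; omega
      · exact h
    have hmx' : m' ≤ x := by
      rcases h2 with h | h
      · have := Submodule.finrank_mono h
        rw [hm', hx] at this; omega
      · exact h
    intro hbot
    have hs := Submodule.finrank_sup_add_finrank_inf_eq m m'
    rw [hbot, finrank_bot, hm, hm'] at hs
    have := Submodule.finrank_mono (sup_le hmx hmx')
    rw [hx] at this
    omega

theorem blocking_set_and_chromaticNumber_le (q : ℕ) (hq : Fintype.card F = q)
    (l π : SubPG F) (hl : IsLn l) (hπ : IsPl π) (hlπ : l ≤ π) :
    ({P : SubPG F | IsPt P ∧ P ≤ π ∧ ¬ P ≤ l} ∪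
      {σ : SubPG F | IsPl σ ∧ l ≤ σ ∧ σ ≠ π}).ncard = q ^ 2 + q ∧
    (∀ m : SubPG F, IsLn m →
      ∃ x ∈ {P : SubPG F | IsPt P ∧ P ≤ π ∧ ¬ P ≤ l} ∪
        {σ : SubPG F | IsPl σ ∧ l ≤ σ ∧ σ ≠ π}, LineIncid x m) ∧
    (chamberGraph F).chromaticNumber ≤ ((q ^ 2 + q : ℕ) : ℕ∞) := by
  classical
  have hl2 : finrank F l = 2 := hl
  have hπ3 : finrank F π = 3 := hπ
  set A := {P : SubPG F | IsPt P ∧ P ≤ π ∧ ¬ P ≤ l} with hA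
  set B := {σ : SubPG F | IsPl σ ∧ l ≤ σ ∧ σ ≠ π} with hB
  -- auxiliary vectors
  obtain ⟨v2, hv2π, hv2l⟩ := SetLike.exists_of_lt
    (lt_of_le_of_ne hlπ (fun h => by rw [h, hπ3] at hl2; omega))
  obtain ⟨v3, -, hv3π⟩ := SetLike.exists_of_lt
    (lt_of_le_of_ne (le_top : π ≤ ⊤)
      (fun h => by rw [h, finrank_top, finrank_amb] at hπ3; omega))
  have hπeq : l ⊔ Submodule.span F {v2} = π := by
    apply Submodule.eq_of_le_of_finrank_le
      (sup_le hlπ ((Submodule.span_singleton_le_iff_mem _ _).2 hv2π))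
    rw [finrank_sup_span_singleton hv2l, hl2, hπ3]
  have htoeq : π ⊔ Submodule.span F {v3} = ⊤ := by
    apply Submodule.eq_of_le_of_finrank_le le_top
    rw [finrank_top, finrank_amb, finrank_sup_span_singleton hv3π, hπ3]
  -- the bijection for points
  have hAcard : A.ncard = q ^ 2 := by
    have hmemA : ∀ u : ↥l, Submodule.span F {v2 + ↑u} ∈ A := by
      intro u
      have hw0 : v2 + ↑u ≠ 0 := fun h => hv2l (by
        have : v2 = -↑u := eq_neg_of_add_eq_zero_left h
        rw [this]; exact l.neg_mem u.2)
      refine ⟨finrank_span_singleton hw0,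
        (Submodule.span_singleton_le_iff_mem _ _).2 (π.add_mem hv2π (hlπ u.2)), ?_⟩
      intro h
      have hmem : v2 + ↑u ∈ l := h (Submodule.mem_span_singleton_self _)
      exact hv2l (by simpa using l.sub_mem hmem u.2)
    have hbij : Function.Bijective (fun u : ↥l => (⟨_, hmemA u⟩ : ↥A)) := by
      constructor
      · intro u u' h
        have heq : Submodule.span F {v2 + ↑u} = Submodule.span F {v2 + ↑u'} :=
          congrArg Subtype.val h
        have hmem : v2 + ↑u' ∈ Submodule.span F {v2 + ↑u} :=
          heq ▸ Submodule.mem_span_singleton_self _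
        obtain ⟨c, hc⟩ := Submodule.mem_span_singleton.1 hmem
        have key : (c - 1) • v2 = ↑u' - c • ↑u := by
          linear_combination (norm := module) hc
        by_cases hc1 : c = 1
        · apply Subtype.ext
          have : (0 : Fin 4 → F) = ↑u' - ↑u := by
            simpa [hc1] using key
          have := sub_eq_zero.1 this.symm
          exact this.symm ▸ rfl
        · exact absurd (by
            have : v2 = (c - 1)⁻¹ • (↑u' - c • ↑u) := by
              rw [← key, smul_smul, inv_mul_cancel₀ (sub_ne_zero.2 hc1), one_smul]
            rw [this]
            exact l.smul_mem _ (l.sub_mem u'.2 (l.smul_mem _ u.2))) hv2l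
      · rintro ⟨P, hP⟩
        obtain ⟨hPpt, hPπ, hPl⟩ := hP
        obtain ⟨w, hw0, rfl⟩ := pt_gen hPpt
        have hwπ : w ∈ π := hPπ (Submodule.mem_span_singleton_self w)
        rw [← hπeq, Submodule.mem_sup] at hwπ
        obtain ⟨u, hu, z, hz, huz⟩ := hwπ
        obtain ⟨c, rfl⟩ := Submodule.mem_span_singleton.1 hz
        have hc0 : c ≠ 0 := by
          rintro rfl
          apply hPl
          rw [Submodule.span_singleton_le_iff_mem]
          have hwu : w = u := by rw [← huz, zero_smul, add_zero]
          rw [hwu]; exact hu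
        refine ⟨⟨c⁻¹ • u, l.smul_mem _ hu⟩, Subtype.ext ?_⟩
        have hxw : v2 + c⁻¹ • u = c⁻¹ • w := by
          rw [← huz]; match_scalars <;> field_simp
        show Submodule.span F {v2 + c⁻¹ • u} = Submodule.span F {w}
        rw [hxw, Submodule.span_singleton_smul_eq
          (isUnit_iff_ne_zero.2 (inv_ne_zero hc0))]
    have hcards := Nat.card_eq_of_bijective _ hbij
    rw [Nat.card_coe_set_eq] at hcards
    haveI : Fintype ↥l := Fintype.ofFinite _
    rw [← hcards, Nat.card_eq_fintype_card, Module.card_eq_pow_finrank (K := F) (V := ↥l),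
      hl2, hq]
  -- the bijection for planes
  have hBcard : B.ncard = q := by
    have hxπ : ∀ c : F, v3 + c • v2 ∉ π := by
      intro c h
      exact hv3π (by simpa using π.sub_mem h (π.smul_mem c hv2π))
    have hxl : ∀ c : F, v3 + c • v2 ∉ l := fun c h => hxπ c (hlπ h)
    have hmemB : ∀ c : F, l ⊔ Submodule.span F {v3 + c • v2} ∈ B := by
      intro c
      refine ⟨?_, le_sup_left, ?_⟩
      · show finrank F _ = 3
        rw [finrank_sup_span_singleton (hxl c), hl2]
      · intro h
        exact hxπ c (h ▸ Submodule.mem_sup_right (Submodule.mem_span_singleton_self _))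
    have hbij : Function.Bijective (fun c : F => (⟨_, hmemB c⟩ : ↥B)) := by
      constructor
      · intro c c' h
        have heq : l ⊔ Submodule.span F {v3 + c • v2}
            = l ⊔ Submodule.span F {v3 + c' • v2} := congrArg Subtype.val h
        have hmem : v3 + c' • v2 ∈ l ⊔ Submodule.span F {v3 + c • v2} :=
          heq ▸ Submodule.mem_sup_right (Submodule.mem_span_singleton_self _)
        rw [Submodule.mem_sup] at hmem
        obtain ⟨u, hu, z, hz, huz⟩ := hmem
        obtain ⟨a, rfl⟩ := Submodule.mem_span_singleton.1 hz
        have key : (1 - a) • v3 = u + (a * c - c') • v2 := by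
          linear_combination (norm := module) -huz
        by_cases ha : a = 1
        · rw [ha, sub_self, zero_smul, one_mul] at key
          by_contra hcc
          apply hv2l
          have h2 : (c' - c) • v2 = u := by
            linear_combination (norm := module) key
          have : v2 = (c' - c)⁻¹ • u := by
            rw [← h2, smul_smul, inv_mul_cancel₀ (sub_ne_zero.2 (Ne.symm hcc)), one_smul]
          rw [this]; exact l.smul_mem _ hu
        · exact absurd (by
            have : v3 = (1 - a)⁻¹ • (u + (a * c - c') • v2) := by
              rw [← key, smul_smul, inv_mul_cancel₀ (sub_ne_zero.2 (Ne.symm ha)), one_smul]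
            rw [this]
            exact π.smul_mem _ (π.add_mem (hlπ hu) (π.smul_mem _ hv2π))) hv3π
      · rintro ⟨σ, hσ⟩
        obtain ⟨hσpl, hlσ, hσπ⟩ := hσ
        have hσ3 : finrank F σ = 3 := hσpl
        have hσnle : ¬ σ ≤ π := by
          intro h
          exact hσπ (Submodule.eq_of_le_of_finrank_le h (by rw [hσ3, hπ3]))
        obtain ⟨w, hwσ, hwπ⟩ := SetLike.not_le_iff_exists.1 hσnle
        have hwtop : w ∈ π ⊔ Submodule.span F {v3} := htoeq.symm ▸ Submodule.mem_top
        rw [Submodule.mem_sup] at hwtop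
        obtain ⟨p, hp, z, hz, hpz⟩ := hwtop
        obtain ⟨d, rfl⟩ := Submodule.mem_span_singleton.1 hz
        have hd0 : d ≠ 0 := by
          rintro rfl
          apply hwπ
          have : w = p := by rw [← hpz, zero_smul, add_zero]
          rw [this]; exact hp
        have hpmem : p ∈ l ⊔ Submodule.span F {v2} := hπeq.symm ▸ hp
        rw [Submodule.mem_sup] at hpmem
        obtain ⟨u, hu, z', hz', huz'⟩ := hpmem
        obtain ⟨e, rfl⟩ := Submodule.mem_span_singleton.1 hz'
        refine ⟨d⁻¹ * e, Subtype.ext ?_⟩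
        have hx : v3 + (d⁻¹ * e) • v2 = d⁻¹ • w - d⁻¹ • u := by
          rw [← hpz, ← huz']; match_scalars <;> field_simp <;> ring
        have hxσ : v3 + (d⁻¹ * e) • v2 ∈ σ := by
          rw [hx]
          exact σ.sub_mem (σ.smul_mem _ hwσ) (σ.smul_mem _ (hlσ hu))
        show l ⊔ Submodule.span F {v3 + (d⁻¹ * e) • v2} = σ
        apply Submodule.eq_of_le_of_finrank_le
          (sup_le hlσ ((Submodule.span_singleton_le_iff_mem _ _).2 hxσ))
        rw [hσ3, finrank_sup_span_singleton (hxl _), hl2]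
    have hcards := Nat.card_eq_of_bijective _ hbij
    rw [Nat.card_coe_set_eq] at hcards
    rw [← hcards, Nat.card_eq_fintype_card, hq]
  have hdisj : Disjoint A B := Set.disjoint_left.mpr (by
    rintro x ⟨h1, -, -⟩ ⟨h3, -, -⟩
    have h1' : finrank F x = 1 := h1
    have h3' : finrank F x = 3 := h3
    omega)
  have hunion : (A ∪ B).ncard = q ^ 2 + q := by
    rw [Set.ncard_union_eq hdisj (Set.toFinite A) (Set.toFinite B), hAcard, hBcard]
  -- blocking property
  have hblock : ∀ m : SubPG F, IsLn m → ∃ x ∈ A ∪ B, LineIncid x m := by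
    intro m hm
    have hm2 : finrank F m = 2 := hm
    by_cases hmπ : m ≤ π
    · by_cases hml : m = l
      · subst hml
        have hv3m : v3 ∉ m := fun h => hv3π (hmπ h)
        refine ⟨m ⊔ Submodule.span F {v3}, Or.inr ⟨?_, le_sup_left, ?_⟩,
          Or.inr le_sup_left⟩
        · show finrank F _ = 3
          rw [finrank_sup_span_singleton hv3m, hm2]
        · intro h
          exact hv3π (h ▸ Submodule.mem_sup_right (Submodule.mem_span_singleton_self _))
      · have hne : m ⊓ l ≠ m := by
          intro h
          exact hml (Submodule.eq_of_le_of_finrank_le (inf_eq_left.1 h) (by rw [hl2, hm2]))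
        obtain ⟨w, hwm, hwml⟩ := SetLike.exists_of_lt (lt_of_le_of_ne inf_le_left hne)
        have hwl : w ∉ l := fun h => hwml (Submodule.mem_inf.2 ⟨hwm, h⟩)
        have hw0 : w ≠ 0 := fun h => hwl (h ▸ l.zero_mem)
        exact ⟨Submodule.span F {w},
          Or.inl ⟨finrank_span_singleton hw0,
            (Submodule.span_singleton_le_iff_mem _ _).2 (hmπ hwm),
            fun h => hwl (h (Submodule.mem_span_singleton_self _))⟩,
          Or.inl ((Submodule.span_singleton_le_iff_mem _ _).2 hwm)⟩
    · have hs := Submodule.finrank_sup_add_finrank_inf_eq m π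
      have h4 : finrank F ↥(m ⊔ π) ≤ 4 := by
        have := Submodule.finrank_le (m ⊔ π)
        rwa [finrank_amb] at this
      have hle2 : finrank F ↥(m ⊓ π) ≤ 2 := hm2 ▸ Submodule.finrank_mono inf_le_left
      have hne2 : finrank F ↥(m ⊓ π) ≠ 2 := by
        intro h
        exact hmπ (inf_eq_left.1 (Submodule.eq_of_le_of_finrank_le inf_le_left
          (by rw [hm2, h])))
      have hinf1 : finrank F ↥(m ⊓ π) = 1 := by
        rw [hm2, hπ3] at hs; omega
      by_cases hcl : m ⊓ π ≤ l
      · have hml_eq : m ⊓ l = m ⊓ π :=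
          le_antisymm (inf_le_inf_left m hlπ) (le_inf inf_le_left hcl)
        have hs2 := Submodule.finrank_sup_add_finrank_inf_eq m l
        rw [hml_eq, hinf1, hm2, hl2] at hs2
        refine ⟨m ⊔ l, Or.inr ⟨?_, le_sup_right, ?_⟩, Or.inr le_sup_left⟩
        · show finrank F _ = 3
          omega
        · intro h
          exact hmπ (h ▸ le_sup_left)
      · exact ⟨m ⊓ π, Or.inl ⟨hinf1, inf_le_right, hcl⟩, Or.inl inf_le_left⟩
  refine ⟨hunion, hblock, ?_⟩
  -- coloring
  haveI : Fintype ↥(A ∪ B) := Fintype.ofFinite _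
  have hcard : Fintype.card ↥(A ∪ B) = q ^ 2 + q := by
    rw [← Nat.card_eq_fintype_card, Nat.card_coe_set_eq, hunion]
  have col : (chamberGraph F).Coloring ↥(A ∪ B) :=
    SimpleGraph.Coloring.mk
      (fun c => ⟨(hblock c.1.2.1 c.2.2.1).choose, (hblock c.1.2.1 c.2.2.1).choose_spec.1⟩)
      (by
        intro c c' hadj heq
        have hx1 := (hblock c.1.2.1 c.2.2.1).choose_spec
        have hx2 := (hblock c'.1.2.1 c'.2.2.1).choose_spec
        have hxx : (hblock c.1.2.1 c.2.2.1).choose = (hblock c'.1.2.1 c'.2.2.1).choose :=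
          congrArg Subtype.val heq
        have hptpl : IsPt (hblock c.1.2.1 c.2.2.1).choose ∨
            IsPl (hblock c.1.2.1 c.2.2.1).choose := by
          rcases hx1.1 with h | h
          · exact Or.inl h.1
          · exact Or.inr h.1
        exact line_inf_ne_bot hptpl c.2.2.1 c'.2.2.1 hx1.2 (hxx ▸ hx2.2) hadj.2.1)
  have hcolorable : (chamberGraph F).Colorable (q ^ 2 + q) := hcard ▸ col.colorable
  exact hcolorable.chromaticNumber_le
end
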